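/- Static regret for Optimistic Greedy Projection (OGP): Let E be a real Hilbert space, C ⊆ E nonempty, closed, convex and bounded with diameter ρ = sup_{x,y∈C}‖x − y‖, a ∈ C, T ≥ 1, and 0 < θ_1 ≤ θ_2 ≤ … ≤ θ_T. Let x̂_t* ∈ E, define x̃_1 = a, x̃_t = P_C(x̃_{t−1} − θ_{t−1} x_{t−1}*) for t ≥ 2, and x_t = P_C(x̃_t − θ_t x̂_t*), and let f_t: E → ℝ ∪ {+∞} be functions with x_t* ∈ ∂f_t(x_t). Then for every z ∈ C with f_t(z) < +∞ for all t: Σ_{t=1}^T (f_t(x_t) − f_t(z)) ≤ (1/(2θ_1))‖z − a‖² + Σ_{t=1}^T (1/θ_t) Q_ρ*(θ_t‖x_t* − x̂_t*‖) − Σ_{t=1}^T (1/(2θ_t)) ‖x_t − x̃_t‖². -/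

import Mathlib

/-!
In a round with centre `x̃`, the point played is `x = P_C (x̃ - θ ĝ)` and the next centre is
`x⁺ = P_C (x̃ - θ g)`. Split `⟪g, x - z⟫ = ⟪g - ĝ, x - x⁺⟫ + ⟪ĝ, x - x⁺⟫ + ⟪g, x⁺ - z⟫`. The last two terms are
controlled by the three-point inequality of the two projections; the first by Cauchy–Schwarz and
the Fenchel–Young inequality for `Q_ρ`, which applies because `‖x - x⁺‖ ≤ ρ`. Summing, the terms
`‖x̃_t - z‖² / (2θ_t)` telescope since `θ_t` increases, and the subgradient inequality bounds the
regret by the linearized regret `∑ ⟪x_t*, x_t - z⟫`.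
-/

open Finset

/-- Subdifferential of an extended-real-valued function on a real Hilbert space:
`∂f(x) = {g : f(y) ≥ f(x) + ⟨g, y − x⟩ for all y}`. -/
def subdiff {E : Type*} [NormedAddCommGroup E] [InnerProductSpace ℝ E]
    (f : E → EReal) (x : E) : Set E :=
  {g | ∀ y : E, f x + (((inner ℝ g (y - x) : ℝ)) : EReal) ≤ f y}

/-- `Q_ρ*(κ) = κ²/2 − (|κ| − ρ)₊²/2`, the conjugate of the truncated quadratic `Q_ρ`. -/
noncomputable def Qstar (ρ : ℝ) (κ : ℝ) : ℝ :=
  κ ^ 2 / 2 - (max (|κ| - ρ) 0) ^ 2 / 2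

section NearestPoint

variable {E : Type*} [NormedAddCommGroup E] [InnerProductSpace ℝ E]

theorem real_inner_sub_le_zero_of_forall_norm_sub_le {C : Set E} (hC : Convex ℝ C) {x p : E}
    (hp : p ∈ C) (hmin : ∀ y ∈ C, ‖x - p‖ ≤ ‖x - y‖) {c : E} (hc : c ∈ C) :
    inner ℝ (x - p) (c - p) ≤ 0 := by
  have : Nonempty C := ⟨⟨p, hp⟩⟩
  have hinf : ‖x - p‖ = ⨅ y : C, ‖x - y‖ :=
    le_antisymm (le_ciInf fun y => hmin y y.2)
      (ciInf_le ⟨0, fun _ ⟨_, h⟩ => h ▸ norm_nonneg _⟩ (⟨p, hp⟩ : C))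
  exact (norm_eq_iInf_iff_real_inner_le_zero hC hp).mp hinf c hc

/-- The three-point inequality of a projected step `y = P_C (x - θ g)`. -/
theorem two_mul_real_inner_le_of_forall_norm_sub_le {C : Set E} (hC : Convex ℝ C) {θ : ℝ}
    {x g y : E} (hy : y ∈ C) (hmin : ∀ c ∈ C, ‖x - θ • g - y‖ ≤ ‖x - θ • g - c‖)
    {z : E} (hz : z ∈ C) :
    2 * θ * inner ℝ g (y - z) ≤ ‖x - z‖ ^ 2 - ‖y - z‖ ^ 2 - ‖x - y‖ ^ 2 := by
  have hvar := real_inner_sub_le_zero_of_forall_norm_sub_le hC hy hmin hz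
  have hexpand : inner ℝ (x - θ • g - y) (z - y)
      = θ * inner ℝ g (y - z) - inner ℝ (x - y) (y - z) := by
    rw [show x - θ • g - y = (x - y) - θ • g by abel, show z - y = -(y - z) by abel]
    simp only [inner_sub_left, inner_neg_right, real_inner_smul_left]
    ring
  have hsplit : ‖x - z‖ ^ 2 = ‖x - y‖ ^ 2 + 2 * inner ℝ (x - y) (y - z) + ‖y - z‖ ^ 2 := by
    rw [show x - z = (x - y) + (y - z) by abel, norm_add_sq_real]
  linarith

end NearestPoint

/-- Fenchel–Young inequality for the truncated quadratic `Q_ρ`. -/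
theorem mul_le_sq_div_two_add_Qstar {ρ s : ℝ} (hs₀ : 0 ≤ s) (hsρ : s ≤ ρ) (κ : ℝ) :
    κ * s ≤ s ^ 2 / 2 + Qstar ρ κ := by
  have habs : κ * s ≤ |κ| * s := mul_le_mul_of_nonneg_right (le_abs_self κ) hs₀
  rw [Qstar, ← sq_abs κ]
  rcases le_total |κ| ρ with h | h
  · rw [max_eq_right (by linarith)]; nlinarith [sq_nonneg (s - |κ|)]
  · rw [max_eq_left (by linarith)]; nlinarith [sq_nonneg (s - |κ|), sq_nonneg (|κ| - ρ)]

theorem real_inner_le_sq_div_two_add_Qstar {E : Type*} [NormedAddCommGroup E]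
    [InnerProductSpace ℝ E] {ρ : ℝ} (u : E) {v : E} (hv : ‖v‖ ≤ ρ) :
    inner ℝ u v ≤ ‖v‖ ^ 2 / 2 + Qstar ρ ‖u‖ :=
  (real_inner_le_norm u v).trans (mul_le_sq_div_two_add_Qstar (norm_nonneg v) hv ‖u‖)

section OptimisticStep

variable {E : Type*} [NormedAddCommGroup E] [InnerProductSpace ℝ E]

/-- One round of optimistic projected descent from the centre `x₀`: the point played is
`x = P_C (x₀ - θ ĝ)` for a guess `ĝ` of the gradient `g`, the next centre is `y = P_C (x₀ - θ g)`. -/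
theorem real_inner_le_of_optimistic_step {C : Set E} (hC : Convex ℝ C)
    (hCb : Bornology.IsBounded C) {θ : ℝ} (hθ : 0 < θ) {x₀ g ĝ x y z : E}
    (hx : x ∈ C) (hxmin : ∀ c ∈ C, ‖x₀ - θ • ĝ - x‖ ≤ ‖x₀ - θ • ĝ - c‖)
    (hy : y ∈ C) (hymin : ∀ c ∈ C, ‖x₀ - θ • g - y‖ ≤ ‖x₀ - θ • g - c‖) (hz : z ∈ C) :
    inner ℝ g (x - z)
      ≤ 1 / (2 * θ) * (‖x₀ - z‖ ^ 2 - ‖y - z‖ ^ 2)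
        + 1 / θ * Qstar (Metric.diam C) (θ * ‖g - ĝ‖)
        - 1 / (2 * θ) * ‖x - x₀‖ ^ 2 := by
  have hcentre := two_mul_real_inner_le_of_forall_norm_sub_le hC hy hymin hz
  have hplay := two_mul_real_inner_le_of_forall_norm_sub_le hC hx hxmin hy
  have herror : θ * inner ℝ (g - ĝ) (x - y)
      ≤ ‖x - y‖ ^ 2 / 2 + Qstar (Metric.diam C) (θ * ‖g - ĝ‖) := by
    have hdiam : ‖x - y‖ ≤ Metric.diam C := by
      rw [← dist_eq_norm]; exact Metric.dist_le_diam_of_mem hCb hx hy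
    simpa only [norm_smul, Real.norm_of_nonneg hθ.le, real_inner_smul_left]
      using real_inner_le_sq_div_two_add_Qstar (θ • (g - ĝ)) hdiam
  have hsplit : inner ℝ g (x - z)
      = inner ℝ (g - ĝ) (x - y) + inner ℝ ĝ (x - y) + inner ℝ g (y - z) := by
    rw [show x - z = (x - y) + (y - z) by abel, inner_add_right, inner_sub_left]
    ring
  rw [norm_sub_rev x₀ x] at hplay
  rw [hsplit]
  field_simp
  linarith

end OptimisticStep

theorem sum_Icc_mul_sub_le_of_antitoneOn {w a : ℕ → ℝ} (ha : ∀ t, 0 ≤ a t) {T : ℕ}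
    (hT : 1 ≤ T) (hw : AntitoneOn w (Icc 1 T)) :
    ∑ t ∈ Icc 1 T, w t * (a t - a (t + 1)) ≤ w 1 * a 1 - w T * a (T + 1) := by
  induction T, hT using Nat.le_induction with
  | base => simp only [Icc_self, sum_singleton, mul_sub, le_refl]
  | succ n hn ih =>
    have hwn : w (n + 1) ≤ w n :=
      hw (mem_Icc.2 ⟨hn, n.le_succ⟩) (right_mem_Icc.2 (hn.trans n.le_succ)) n.le_succ
    rw [sum_Icc_succ_top (by omega)]
    have hprev := ih (hw.mono (coe_subset.2 (Icc_subset_Icc_right n.le_succ)))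
    nlinarith [ha (n + 1)]

theorem sub_le_real_inner_of_mem_subdiff {E : Type*} [NormedAddCommGroup E]
    [InnerProductSpace ℝ E] {f : E → EReal} {x g : E} (hg : g ∈ subdiff f x) (z : E) :
    f x - f z ≤ ((inner ℝ g (x - z) : ℝ) : EReal) := by
  have hx : f x ≤ f z - ((inner ℝ g (z - x) : ℝ) : EReal) :=
    (EReal.le_sub_iff_add_le (.inl (EReal.coe_ne_bot _)) (.inl (EReal.coe_ne_top _))).2 (hg z)
  rw [EReal.sub_le_iff_le_add (.inr (EReal.coe_ne_top _)) (.inr (EReal.coe_ne_bot _))]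
  rwa [← neg_sub x z, inner_neg_right, EReal.coe_neg, sub_eq_add_neg, neg_neg, add_comm] at hx

theorem sum_real_inner_le_of_optimistic_projection {E : Type*} [NormedAddCommGroup E]
    [InnerProductSpace ℝ E] {C : Set E} (hC : Convex ℝ C) (hCb : Bornology.IsBounded C)
    {P : E → E} (hP : ∀ x : E, P x ∈ C ∧ ∀ y ∈ C, ‖x - P x‖ ≤ ‖x - y‖)
    {T : ℕ} (hT : 1 ≤ T) {θ : ℕ → ℝ} (hθpos : 0 < θ 1) (hθmono : MonotoneOn θ (Icc 1 T))
    {g ĝ x₀ x : ℕ → E}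
    (hx₀ : ∀ t ∈ Icc 2 T, x₀ t = P (x₀ (t - 1) - θ (t - 1) • g (t - 1)))
    (hx : ∀ t ∈ Icc 1 T, x t = P (x₀ t - θ t • ĝ t)) {z : E} (hz : z ∈ C) :
    ∑ t ∈ Icc 1 T, inner ℝ (g t) (x t - z)
      ≤ 1 / (2 * θ 1) * ‖z - x₀ 1‖ ^ 2
        + ∑ t ∈ Icc 1 T, 1 / θ t * Qstar (Metric.diam C) (θ t * ‖g t - ĝ t‖)
        - ∑ t ∈ Icc 1 T, 1 / (2 * θ t) * ‖x t - x₀ t‖ ^ 2 := by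
  have hθ : ∀ t ∈ Icc 1 T, 0 < θ t := fun t ht =>
    hθpos.trans_le (hθmono (left_mem_Icc.2 hT) ht (mem_Icc.1 ht).1)
  -- the centres `x₀ t`, extended by the centre `x₀ (T + 1)` that the last round would produce
  set x₀' := Function.update x₀ (T + 1) (P (x₀ T - θ T • g T))
  have hx₀' : ∀ t ∈ Icc 1 T, x₀' t = x₀ t := fun t ht =>
    Function.update_of_ne (Nat.lt_succ_of_le (mem_Icc.1 ht).2).ne _ _
  have hx₀'succ : ∀ t ∈ Icc 1 T, x₀' (t + 1) = P (x₀ t - θ t • g t) := by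
    intro t ht
    obtain ⟨ht₁, htT⟩ := mem_Icc.1 ht
    rcases htT.eq_or_lt with rfl | hlt
    · exact Function.update_self ..
    · rw [hx₀' (t + 1) (mem_Icc.2 ⟨by omega, hlt⟩), hx₀ (t + 1) (mem_Icc.2 ⟨by omega, hlt⟩),
        Nat.add_sub_cancel]
  have hround : ∀ t ∈ Icc 1 T, inner ℝ (g t) (x t - z)
      ≤ 1 / (2 * θ t) * (‖x₀' t - z‖ ^ 2 - ‖x₀' (t + 1) - z‖ ^ 2)
        + 1 / θ t * Qstar (Metric.diam C) (θ t * ‖g t - ĝ t‖)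
        - 1 / (2 * θ t) * ‖x t - x₀ t‖ ^ 2 := by
    intro t ht
    rw [hx₀' t ht, hx₀'succ t ht, hx t ht]
    exact real_inner_le_of_optimistic_step hC hCb (hθ t ht) (hP _).1 (hP _).2 (hP _).1 (hP _).2 hz
  have htele := sum_Icc_mul_sub_le_of_antitoneOn (w := fun t => 1 / (2 * θ t))
    (fun t => sq_nonneg ‖x₀' t - z‖) hT fun s hs t ht hst => by
      have := hθ s hs
      show 1 / (2 * θ t) ≤ 1 / (2 * θ s)
      gcongr
      exact hθmono hs ht hst
  have hlast : 0 ≤ 1 / (2 * θ T) * ‖x₀' (T + 1) - z‖ ^ 2 := by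
    have := hθ T (right_mem_Icc.2 hT)
    positivity
  rw [hx₀' 1 (left_mem_Icc.2 hT), norm_sub_rev] at htele
  have hsum := sum_le_sum hround
  rw [sum_sub_distrib, sum_add_distrib] at hsum
  linarith

theorem static_regret_OGP_general
    {E : Type*} [NormedAddCommGroup E] [InnerProductSpace ℝ E]
    (C : Set E) (hCconv : Convex ℝ C)
    (hCbdd : Bornology.IsBounded C)
    (P : E → E)
    (hP : ∀ x : E, P x ∈ C ∧ ∀ y ∈ C, ‖x - P x‖ ≤ ‖x - y‖)
    (a : E)
    (T : ℕ) (hT : 1 ≤ T)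
    (θ : ℕ → ℝ) (hθpos : 0 < θ 1)
    (hθmono : ∀ s t : ℕ, 1 ≤ s → s ≤ t → t ≤ T → θ s ≤ θ t)
    (xstar xhat : ℕ → E)
    (xtil xt : ℕ → E)
    (hxtil1 : xtil 1 = a)
    (hxtil : ∀ t ∈ Icc 2 T, xtil t = P (xtil (t - 1) - θ (t - 1) • xstar (t - 1)))
    (hxt : ∀ t ∈ Icc 1 T, xt t = P (xtil t - θ t • xhat t))
    (f : ℕ → E → EReal)
    (hf : ∀ t ∈ Icc 1 T, xstar t ∈ subdiff (f t) (xt t))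
    (z : E) (hzC : z ∈ C) :
    ∑ t ∈ Icc 1 T, (f t (xt t) - f t z)
      ≤ (((1 / (2 * θ 1)) * ‖z - a‖ ^ 2
          + ∑ t ∈ Icc 1 T, (1 / θ t) *
              Qstar (Metric.diam C) (θ t * ‖xstar t - xhat t‖)
          - ∑ t ∈ Icc 1 T, (1 / (2 * θ t)) * ‖xt t - xtil t‖ ^ 2 : ℝ) : EReal) := by
  have hlinear := sum_real_inner_le_of_optimistic_projection hCconv hCbdd hP hT hθpos
    (fun s hs t ht hst => hθmono s t (mem_Icc.1 hs).1 hst (mem_Icc.1 ht).2) hxtil hxt hzC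
  rw [hxtil1] at hlinear
  calc ∑ t ∈ Icc 1 T, (f t (xt t) - f t z)
      ≤ ∑ t ∈ Icc 1 T, ((inner ℝ (xstar t) (xt t - z) : ℝ) : EReal) :=
        sum_le_sum fun t ht => sub_le_real_inner_of_mem_subdiff (hf t ht) z
    _ = ((∑ t ∈ Icc 1 T, inner ℝ (xstar t) (xt t - z) : ℝ) : EReal) :=
        (map_sum (⟨⟨Real.toEReal, EReal.coe_zero⟩, EReal.coe_add⟩ : ℝ →+ EReal) _ _).symm
    _ ≤ _ := EReal.coe_le_coe_iff.2 hlinear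

/-- **Static regret for Optimistic Greedy Projection (OGP).** -/
theorem static_regret_OGP
    {E : Type*} [NormedAddCommGroup E] [InnerProductSpace ℝ E] [CompleteSpace E]
    (C : Set E) (hCne : C.Nonempty) (hCclosed : IsClosed C) (hCconv : Convex ℝ C)
    (hCbdd : Bornology.IsBounded C)
    (P : E → E)
    (hP : ∀ x : E, P x ∈ C ∧ ∀ y ∈ C, ‖x - P x‖ ≤ ‖x - y‖)
    (a : E) (ha : a ∈ C)
    (T : ℕ) (hT : 1 ≤ T)
    (θ : ℕ → ℝ) (hθpos : 0 < θ 1)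
    (hθmono : ∀ s t : ℕ, 1 ≤ s → s ≤ t → t ≤ T → θ s ≤ θ t)
    (xstar xhat : ℕ → E)
    (xtil xt : ℕ → E)
    (hxtil1 : xtil 1 = a)
    (hxtil : ∀ t ∈ Icc 2 T, xtil t = P (xtil (t - 1) - θ (t - 1) • xstar (t - 1)))
    (hxt : ∀ t ∈ Icc 1 T, xt t = P (xtil t - θ t • xhat t))
    (f : ℕ → E → EReal)
    (hf : ∀ t ∈ Icc 1 T, xstar t ∈ subdiff (f t) (xt t))
    (z : E) (hzC : z ∈ C) (hz : ∀ t ∈ Icc 1 T, f t z < ⊤) :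
    ∑ t ∈ Icc 1 T, (f t (xt t) - f t z)
      ≤ (((1 / (2 * θ 1)) * ‖z - a‖ ^ 2
          + ∑ t ∈ Icc 1 T, (1 / θ t) *
              Qstar (Metric.diam C) (θ t * ‖xstar t - xhat t‖)
          - ∑ t ∈ Icc 1 T, (1 / (2 * θ t)) * ‖xt t - xtil t‖ ^ 2 : ℝ) : EReal) :=
  static_regret_OGP_general C hCconv hCbdd P hP a T hT θ hθpos hθmono xstar xhat xtil xt hxtil1
    hxtil hxt f hf z hzC
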